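/- arXiv:1908.10200 — 3 statements merged into one kernel-verified Lean document; each statement's English description precedes it below -/
import Mathlib

section
/- A Hilbert space of Hilbert dimension λ (for infinite λ) has cardinality λ^ℵ₀. -/
/-!
The Hilbert basis identifies `H` with `ℓ²(ι)`. A square-summable family has countable support,
so it is coded by a sequence in `ι × ℂ`; hence `#H ≤ (λ * 𝔠) ^ ℵ₀ = λ ^ ℵ₀`. Conversely, fix
`ℕ × ι ≃ ι` and some `x` with `0 < ‖x‖ < 1`: a sequence `f : ℕ → ι` is coded by the vector with
entry `x ^ n` at `(n, f n)` and `0` elsewhere, which lies in `ℓ²` and determines `f`.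
-/

open Cardinal Function
open scoped ENNReal

theorem Memℓp.countable_support {α E : Type*} [NormedAddCommGroup E]
    {p : ℝ≥0∞} {f : α → E} (hf : Memℓp f p) (hp : 0 < p.toReal) : (support f).Countable :=
  ((memℓp_gen_iff hp).1 hf).countable_support.mono fun _ hi =>
    (Real.rpow_pos_of_pos (norm_pos_iff.2 hi) _).ne'

theorem Memℓp.extend_zero {α β E : Type*} [NormedAddCommGroup E] {p : ℝ≥0∞} {j : α → β}
    (hj : Injective j) {c : α → E} (hc : Memℓp c p) (hp : 0 < p.toReal) :
    Memℓp (extend j c 0) p := by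
  refine memℓp_gen ((hj.summable_iff fun b hb => ?_).1 ?_)
  · simp [extend_apply' _ _ _ hb, Real.zero_rpow hp.ne']
  · simpa [comp_def, hj.extend_apply] using (memℓp_gen_iff hp).1 hc

theorem memℓp_pow_of_norm_lt_one {𝕜 : Type*} [NormedField 𝕜] {p : ℝ≥0∞} {x : 𝕜} (hx : ‖x‖ < 1)
    (hp : 0 < p.toReal) : Memℓp (fun n : ℕ => x ^ n) p := by
  refine memℓp_gen ?_
  simp_rw [norm_pow, ← Real.rpow_natCast, ← Real.rpow_mul (norm_nonneg x), mul_comm,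
    Real.rpow_mul (norm_nonneg x), Real.rpow_natCast]
  exact summable_geometric_of_lt_one (by positivity)
    (Real.rpow_lt_one (norm_nonneg x) hx hp)

theorem injective_extend_graph {γ α β M : Type*} [Zero M] {c : γ → M} (hc : ∀ n, c n ≠ 0)
    (e : γ × α ↪ β) : Injective fun f : γ → α => extend (fun n => e (n, f n)) c 0 := by
  intro f g hfg
  replace hfg : extend (fun m => e (m, f m)) c 0 = extend (fun m => e (m, g m)) c 0 := hfg
  have hgraph : Injective fun m => e (m, f m) := fun _ _ h => (Prod.mk.inj (e.injective h)).1
  funext n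
  have hne : extend (fun m => e (m, g m)) c 0 (e (n, f n)) ≠ 0 := by
    rw [← hfg, hgraph.extend_apply]
    exact hc n
  obtain ⟨m, hm⟩ : ∃ m, e (m, g m) = e (n, f n) := by
    by_contra h
    exact hne (extend_apply' _ _ _ h)
  obtain ⟨rfl, hgf⟩ := Prod.mk.inj (e.injective hm)
  exact hgf.symm

theorem mk_countable_support_le {ι M : Type*} [Zero M] [Nonempty ι] :
    #{f : ι → M // (support f).Countable} ≤ #(ℕ → ι × M) := by
  choose e he using fun f : {f : ι → M // (support f).Countable} =>
    Set.countable_iff_exists_subset_range.1 f.2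
  refine mk_le_of_injective (f := fun f n => (e f n, f.1 (e f n))) fun f g hfg => ?_
  simp only [funext_iff, Prod.mk.injEq] at hfg
  have hrange : Set.range (e f) = Set.range (e g) := by
    ext i; constructor
    · rintro ⟨n, rfl⟩; exact ⟨n, ((hfg n).1).symm⟩
    · rintro ⟨n, rfl⟩; exact ⟨n, (hfg n).1⟩
  have hzero : ∀ f : {f : ι → M // (support f).Countable}, ∀ i ∉ Set.range (e f), f.1 i = 0 :=
    fun f i hi => notMem_support.1 fun h => hi (he f h)
  refine Subtype.ext (funext fun i => ?_)
  by_cases hi : i ∈ Set.range (e f)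
  · obtain ⟨n, rfl⟩ := hi
    rw [(hfg n).2, (hfg n).1]
  · rw [hzero f i hi, hzero g i (hrange ▸ hi)]

theorem mk_lp_le {ι E : Type*} [NormedAddCommGroup E] [Nonempty ι] {p : ℝ≥0∞}
    (hp : 0 < p.toReal) : #(lp (fun _ : ι => E) p) ≤ #(ℕ → ι × E) :=
  (mk_le_of_injective (f := fun x : lp (fun _ : ι => E) p =>
    (⟨⇑x, (lp.memℓp x).countable_support hp⟩ : {f : ι → E // (support f).Countable}))
    fun _ _ h => lp.ext (by injection h)).trans mk_countable_support_le

theorem lift_mk_arrow_le_lift_mk_lp {α : Type u} {β : Type v} {𝕜 : Type w}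
    [NontriviallyNormedField 𝕜] {p : ℝ≥0∞} (hp : 0 < p.toReal) (e : ℕ × α ↪ β) :
    lift.{max v w} #(ℕ → α) ≤ lift.{u} #(lp (fun _ : β => 𝕜) p) := by
  obtain ⟨x, hx₀, hx₁⟩ := NormedField.exists_norm_lt_one 𝕜
  have hgraph (f : ℕ → α) : Injective fun n => e (n, f n) :=
    fun _ _ h => (Prod.mk.inj (e.injective h)).1
  have hmem (f : ℕ → α) := (memℓp_pow_of_norm_lt_one hx₁ hp).extend_zero (hgraph f) hp
  refine lift_mk_le'.2 ⟨⟨fun f => ⟨_, hmem f⟩, fun _ _ h => ?_⟩⟩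
  exact injective_extend_graph (fun n => pow_ne_zero n (norm_pos_iff.1 hx₀)) e
    (congrArg Subtype.val h)

theorem mul_continuum_power_aleph0 {κ : Cardinal} (hκ : 2 ≤ κ) : (κ * 𝔠) ^ ℵ₀ = κ ^ ℵ₀ := by
  have h𝔠 : 𝔠 ≤ κ ^ ℵ₀ := two_power_aleph0 ▸ power_le_power_right hκ
  rw [mul_power, continuum_power_aleph0]
  exact mul_eq_left (aleph0_le_continuum.trans h𝔠) h𝔠 continuum_ne_zero

theorem hilbert_card_general {H : Type u} [NormedAddCommGroup H] [InnerProductSpace ℂ H]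
    {ι : Type u} (b : HilbertBasis ι ℂ H)
    (hι : Cardinal.aleph0 ≤ Cardinal.mk ι) :
    Cardinal.mk H = Cardinal.mk ι ^ Cardinal.aleph0 := by
  have : Infinite ι := infinite_iff.2 hι
  have hp : 0 < (2 : ℝ≥0∞).toReal := by norm_num
  obtain ⟨e⟩ : Nonempty (ℕ × ι ≃ ι) := Cardinal.eq.1 (by simp [aleph0_mul_eq hι])
  rw [mk_congr b.repr.toEquiv]
  refine le_antisymm ?_ ?_
  · calc #(lp (fun _ : ι => ℂ) 2) ≤ #(ℕ → ι × ℂ) := mk_lp_le hp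
      _ = (#ι * 𝔠) ^ ℵ₀ := by simp
      _ = #ι ^ ℵ₀ := mul_continuum_power_aleph0 ((natCast_lt_aleph0 (n := 2)).le.trans hι)
  · simpa using lift_mk_arrow_le_lift_mk_lp (𝕜 := ℂ) hp e.toEmbedding

/-- A complex Hilbert space with a Hilbert (orthonormal) basis of infinite
cardinality `λ` has cardinality `λ ^ ℵ₀`. -/
theorem hilbert_card {H : Type u} [NormedAddCommGroup H] [InnerProductSpace ℂ H]
    [CompleteSpace H] {ι : Type u} (b : HilbertBasis ι ℂ H)
    (hι : Cardinal.aleph0 ≤ Cardinal.mk ι) :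
    Cardinal.mk H = Cardinal.mk ι ^ Cardinal.aleph0 :=
  hilbert_card_general b hι
end

section
/- If U : Hilb_r → Set is a faithful functor preserving directed colimits, then every element x ∈ U(A) for a Hilbert space A is supported on some finite-dimensional subspace of A. -/
open CategoryTheory CategoryTheory.Limits

universe u

/-- Objects of the category of (small) complex Hilbert spaces. -/
structure HilbObj : Type (u + 1) where
  carrier : Type u
  [normedAddCommGroup : NormedAddCommGroup carrier]
  [innerProductSpace : InnerProductSpace ℂ carrier]
  [completeSpace : CompleteSpace carrier]

attribute [instance] HilbObj.normedAddCommGroup HilbObj.innerProductSpace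
  HilbObj.completeSpace

/-- The category of complex Hilbert spaces with linear isometries (`Hilb_r`). -/
instance : Category HilbObj where
  Hom A B := A.carrier →ₗᵢ[ℂ] B.carrier
  id A := LinearIsometry.id
  comp f g := g.comp f
  id_comp f := rfl
  comp_id f := rfl
  assoc f g h := rfl

/-- A morphism of `HilbObj`, as a linear isometry. -/
noncomputable def homIso {A B : HilbObj} (f : A ⟶ B) : A.carrier →ₗᵢ[ℂ] B.carrier := f

/-- A closed subspace of a Hilbert space, as an object of `HilbObj`. -/
noncomputable def subObj (A : HilbObj) (A₀ : Submodule ℂ A.carrier) (h : IsClosed (A₀ : Set A.carrier)) :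
    HilbObj :=
  @HilbObj.mk A₀ _ _ h.completeSpace_coe

/-- The inclusion of a closed subspace, as a morphism of `HilbObj`. -/
noncomputable def incl (A : HilbObj) (A₀ : Submodule ℂ A.carrier) (h : IsClosed (A₀ : Set A.carrier)) :
    subObj A A₀ h ⟶ A :=
  A₀.subtypeₗᵢ

/-- `x ∈ U A` is supported on the subspace `A₀ ⊆ A` if any two linear isometries out of
`A` which agree on `A₀` are sent by `U` to functions agreeing at `x`. -/
def Supported (U : HilbObj.{u} ⥤ Type u) (A : HilbObj) (x : U.obj A)
    (A₀ : Submodule ℂ A.carrier) : Prop :=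
  ∀ (B : HilbObj) (f g : A ⟶ B), (∀ a ∈ A₀, homIso f a = homIso g a) →
    U.map f x = U.map g x

/-- `U` preserves directed colimits if it preserves colimits of shape `J` for every
nonempty directed poset `J`. -/
def PreservesDirectedColimits (U : HilbObj.{u} ⥤ Type u) : Prop :=
  ∀ (J : Type u) (_ : Preorder J) (_ : IsDirected J (· ≤ ·)) (_ : Nonempty J),
    Nonempty (PreservesColimitsOfShape J U)

/-! A Hilbert space is the directed colimit of its finite-dimensional subspaces, so `x` lifts
to `U A₀` for some such subspace `A₀`; and an element in the image of `U (A₀ ↪ A)` is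
supported on `A₀`, since two isometries agreeing on `A₀` have the same composite with the
inclusion. -/

lemma supported_map_incl (U : HilbObj.{u} ⥤ Type u) (A : HilbObj.{u})
    (A₀ : Submodule ℂ A.carrier) (h : IsClosed (A₀ : Set A.carrier))
    (y : U.obj (subObj A A₀ h)) :
    Supported U A (U.map (incl A A₀ h) y) A₀ := by
  intro B f g hfg
  have hcomp : incl A A₀ h ≫ f = incl A A₀ h ≫ g := LinearIsometry.ext fun z => hfg z.1 z.2
  rw [← Functor.map_comp_apply, hcomp, Functor.map_comp_apply]

noncomputable section

variable (A : HilbObj.{u})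

abbrev FinDimSubspace : Type u := {p : Submodule ℂ A.carrier // FiniteDimensional ℂ p}

namespace FinDimSubspace

variable {A}

instance (j : FinDimSubspace A) : FiniteDimensional ℂ j.1 := j.2

instance : IsDirected (FinDimSubspace A) (· ≤ ·) :=
  ⟨fun i j => ⟨⟨i.1 ⊔ j.1, inferInstance⟩,
    show i.1 ≤ i.1 ⊔ j.1 from le_sup_left, show j.1 ≤ i.1 ⊔ j.1 from le_sup_right⟩⟩

instance : Nonempty (FinDimSubspace A) := ⟨⟨⊥, inferInstance⟩⟩

def span (s : Set A.carrier) [Finite s] : FinDimSubspace A :=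
  ⟨Submodule.span ℂ s, FiniteDimensional.span_of_finite ℂ s.toFinite⟩

lemma mem_span {s : Set A.carrier} [Finite s] {a : A.carrier} (ha : a ∈ s) : a ∈ (span s).1 :=
  Submodule.subset_span ha

lemma isClosed (j : FinDimSubspace A) : IsClosed (j.1 : Set A.carrier) :=
  j.1.closed_of_finiteDimensional

variable (A)

def diagram : FinDimSubspace A ⥤ HilbObj where
  obj j := subObj A j.1 j.isClosed
  map f := (⟨Submodule.inclusion (leOfHom f), fun _ => rfl⟩ : _ →ₗᵢ[ℂ] _)
  map_id _ := LinearIsometry.ext fun _ => rfl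
  map_comp _ _ := LinearIsometry.ext fun _ => rfl

def cocone : Cocone (diagram A) where
  pt := A
  ι :=
    { app := fun j => incl A j.1 j.isClosed
      naturality := fun _ _ _ => LinearIsometry.ext fun _ => rfl }

variable {A}

lemma cocone_ι_app_apply_eq (s : Cocone (diagram A)) (i j : FinDimSubspace A) (a : A.carrier)
    (hi : a ∈ i.1) (hj : a ∈ j.1) :
    homIso (s.ι.app i) ⟨a, hi⟩ = homIso (s.ι.app j) ⟨a, hj⟩ := by
  obtain ⟨k, hik, hjk⟩ := exists_ge_ge i j
  rw [← s.w (homOfLE hik), ← s.w (homOfLE hjk)]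
  rfl

def descFun (s : Cocone (diagram A)) (a : A.carrier) : s.pt.carrier :=
  homIso (s.ι.app (span {a})) ⟨a, mem_span (Set.mem_singleton a)⟩

lemma descFun_eq (s : Cocone (diagram A)) (j : FinDimSubspace A) (a : A.carrier) (ha : a ∈ j.1) :
    descFun s a = homIso (s.ι.app j) ⟨a, ha⟩ :=
  cocone_ι_app_apply_eq s _ _ _ _ _

def desc (s : Cocone (diagram A)) : A ⟶ s.pt where
  toFun := descFun s
  map_add' a b := by
    have ha : a ∈ (span {a, b}).1 := mem_span (by simp)
    have hb : b ∈ (span {a, b}).1 := mem_span (by simp)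
    rw [descFun_eq s _ a ha, descFun_eq s _ b hb, descFun_eq s _ (a + b) (add_mem ha hb)]
    exact (homIso (s.ι.app _)).map_add ⟨a, ha⟩ ⟨b, hb⟩
  map_smul' c a := by
    have ha : a ∈ (span {a}).1 := mem_span (Set.mem_singleton a)
    rw [descFun_eq s _ a ha, descFun_eq s _ (c • a) (Submodule.smul_mem _ c ha)]
    exact (homIso (s.ι.app _)).map_smul c ⟨a, ha⟩
  norm_map' a := (homIso (s.ι.app (span {a}))).norm_map _

variable (A)

def isColimitCocone : IsColimit (cocone A) where
  desc := desc
  fac s j := LinearIsometry.ext fun z => descFun_eq s j z.1 z.2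
  uniq s m hm := LinearIsometry.ext fun (a : A.carrier) => by
    have ha : a ∈ (span {a}).1 := mem_span (Set.mem_singleton a)
    have hma := congrArg (fun (f : (diagram A).obj (span {a}) ⟶ s.pt) => homIso f ⟨a, ha⟩)
      (hm (span {a}))
    exact hma.trans (descFun_eq s _ a ha).symm

end FinDimSubspace

end

theorem supported_on_finiteDimensional_general (U : HilbObj.{u} ⥤ Type u)
    (hdir : PreservesDirectedColimits U) (A : HilbObj) (x : U.obj A) :
    ∃ A₀ : Submodule ℂ A.carrier, FiniteDimensional ℂ A₀ ∧ Supported U A x A₀ := by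
  have : PreservesColimitsOfShape (FinDimSubspace A) U :=
    (hdir (FinDimSubspace A) inferInstance inferInstance inferInstance).some
  have hc : IsColimit (U.mapCocone (FinDimSubspace.cocone A)) :=
    isColimitOfPreserves U (FinDimSubspace.isColimitCocone A)
  obtain ⟨j, y, rfl⟩ := Types.jointly_surjective _ hc x
  exact ⟨j.1, j.2, supported_map_incl U A j.1 j.isClosed y⟩

/-- If `U : Hilb_r ⥤ Set` is faithful and preserves directed colimits, then every
`x ∈ U A` is supported on some finite-dimensional subspace of `A`. -/
theorem supported_on_finiteDimensional (U : HilbObj.{u} ⥤ Type u) (hU : U.Faithful)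
    (hdir : PreservesDirectedColimits U) (A : HilbObj) (x : U.obj A) :
    ∃ A₀ : Submodule ℂ A.carrier, FiniteDimensional ℂ A₀ ∧ Supported U A x A₀ :=
  supported_on_finiteDimensional_general U hdir A x
end

section
/- If U : Hilb_r → Set is a faithful functor preserving directed colimits, then for every nonzero subspace A₀ of an infinite-dimensional Hilbert space A, there is x₀ ∈ U(A₀) such that U(i_{A₀,A})(x₀) is not supported on the zero subspace. -/
open CategoryTheory CategoryTheory.Limits

universe u

/- A vector supported on the zero subspace cannot tell apart the two summand inclusions
`A₀ ⟶ A ⊕ A`; but these differ as soon as `A₀ ≠ 0`, so a faithful `U` must separate them at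
some point of `U A₀`. -/

noncomputable def doubleObj (A : HilbObj.{u}) : HilbObj.{u} :=
  HilbObj.mk (WithLp 2 (A.carrier × A.carrier))

noncomputable def doubleInl (A : HilbObj) : A ⟶ doubleObj A where
  toLinearMap := (WithLp.linearEquiv 2 ℂ (A.carrier × A.carrier)).symm.toLinearMap ∘ₗ
    LinearMap.inl ℂ A.carrier A.carrier
  norm_map' := WithLp.norm_toLp_fst 2 A.carrier A.carrier

noncomputable def doubleInr (A : HilbObj) : A ⟶ doubleObj A where
  toLinearMap := (WithLp.linearEquiv 2 ℂ (A.carrier × A.carrier)).symm.toLinearMap ∘ₗ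
    LinearMap.inr ℂ A.carrier A.carrier
  norm_map' := WithLp.norm_toLp_snd 2 A.carrier A.carrier

theorem comp_doubleInl_ne_comp_doubleInr {C A : HilbObj} [Nontrivial C.carrier] (f : C ⟶ A) :
    f ≫ doubleInl A ≠ f ≫ doubleInr A := by
  intro h
  obtain ⟨c, hc⟩ := exists_ne (0 : C.carrier)
  have hfc : homIso f c ≠ 0 := (map_ne_zero_iff _ (homIso f).injective).2 hc
  -- the first components are `f c` and `0`
  have hfst := congrArg (fun v : WithLp 2 (A.carrier × A.carrier) => v.fst)
    (congrArg (fun φ : C ⟶ doubleObj A => homIso φ c) h)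
  exact hfc hfst

theorem Supported.map_eq_of_bot {U : HilbObj.{u} ⥤ Type u} {A : HilbObj} {x : U.obj A}
    (hx : Supported U A x ⊥) {B : HilbObj} (f g : A ⟶ B) : U.map f x = U.map g x :=
  hx B f g fun a ha => by rw [(Submodule.mem_bot ℂ).1 ha, map_zero, map_zero]

theorem exists_not_supported_bot_map (U : HilbObj.{u} ⥤ Type u) [U.Faithful] {C A : HilbObj}
    [Nontrivial C.carrier] (f : C ⟶ A) : ∃ x : U.obj C, ¬ Supported U A (U.map f x) ⊥ := by
  by_contra! hsupp
  apply comp_doubleInl_ne_comp_doubleInr f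
  refine U.map_injective (ConcreteCategory.hom_ext _ _ fun x => ?_)
  simpa only [Functor.map_comp_apply] using
    (hsupp x).map_eq_of_bot (doubleInl A) (doubleInr A)

theorem exists_nontrivially_supported_general (U : HilbObj.{u} ⥤ Type u) (hU : U.Faithful)
    (A : HilbObj) (A₀ : Submodule ℂ A.carrier)
    (hc : IsClosed (A₀ : Set A.carrier)) (hne : A₀ ≠ ⊥) :
    ∃ x₀ : U.obj (subObj A A₀ hc),
      ¬ Supported U A (U.map (incl A A₀ hc) x₀) (⊥ : Submodule ℂ A.carrier) :=
  have : Nontrivial (subObj A A₀ hc).carrier := Submodule.nontrivial_iff_ne_bot.2 hne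
  exists_not_supported_bot_map U (incl A A₀ hc)

/-- If `U : Hilb_r ⥤ Set` is faithful and preserves directed colimits, then for every
nonzero closed subspace `A₀` of an infinite-dimensional Hilbert space `A` there is
`x₀ ∈ U A₀` whose image in `U A` is not supported on the zero subspace. -/
theorem exists_nontrivially_supported (U : HilbObj.{u} ⥤ Type u) (hU : U.Faithful)
    (hdir : PreservesDirectedColimits U) (A : HilbObj)
    (hA : ¬ FiniteDimensional ℂ A.carrier) (A₀ : Submodule ℂ A.carrier)
    (hc : IsClosed (A₀ : Set A.carrier)) (hne : A₀ ≠ ⊥) :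
    ∃ x₀ : U.obj (subObj A A₀ hc),
      ¬ Supported U A (U.map (incl A A₀ hc) x₀) (⊥ : Submodule ℂ A.carrier) :=
  exists_nontrivially_supported_general U hU A A₀ hc hne
end
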